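/- arXiv:2501.00549 — 6 statements merged into one kernel-verified Lean document; each statement's English description precedes it below -/
import Mathlib

section
/- Let p_s ∈ (0,1], p_f = 1 - p_s, K ≥ 1 a natural number, and p_0, p ≥ 0 with p_0 + K·p = 1. Define π on pairs (k, i) with 0 ≤ k ≤ K and i ≥ 1 by: π_{0,i} = p_0 · p_s · p_f^{i-1} for i ≥ 1; π_{k,i} = p · p_s · p_f^{i-k-1} for 1 ≤ k ≤ min(K, i-1); and π_{k,i} = 0 otherwise. Then π satisfies the balance equations of the two-dimensional Markov chain: for every target state (m, n) with 0 ≤ m ≤ K and n ≥ 1, ∑_{i=0}^{K} ∑_{j=i+1}^{∞} π_{i,j} · P((i,j),(m,n)) = π_{m,n}, where P((i,j),(m,n)) = p_m' · p_s · [n = m+1] + p_m' · p_f · [n = j+1+m-i], with p_m' = p_0 if m = 0 and p_m' = p if 1 ≤ m ≤ K, and [·] denotes the indicator. -/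
private lemma sum_c_aux (p0 p : ℝ) (K : ℕ) :
    ∑ i ∈ Finset.range (K + 1), (if i = 0 then p0 else p) = p0 + (K : ℝ) * p := by
  induction K with
  | zero => simp
  | succ K ih =>
      rw [Finset.sum_range_succ, ih]
      have h : K + 1 ≠ 0 := by omega
      simp [h]
      push_cast
      ring

/-- Probabilistic clock drift with `k ∈ {0,…,K}`: the claimed stationary
distribution `π` satisfies the balance equations of the two-dimensional
Markov chain `(δ(t), Δ(t))`. -/
theorem balance_equations_probabilistic_drift
    (ps p0 p : ℝ) (K : ℕ) (hK : 1 ≤ K)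
    (hps0 : 0 < ps) (hps1 : ps ≤ 1) (hp0 : 0 ≤ p0) (hp : 0 ≤ p)
    (hsum : p0 + (K : ℝ) * p = 1)
    (π : ℕ → ℕ → ℝ)
    (hπ : ∀ k i, π k i =
      if k = 0 ∧ 1 ≤ i then p0 * ps * (1 - ps) ^ (i - 1)
      else if 1 ≤ k ∧ k ≤ min K (i - 1) then p * ps * (1 - ps) ^ (i - k - 1)
      else 0)
    (P : ℕ × ℕ → ℕ × ℕ → ℝ)
    (hP : ∀ i j m n, P (i, j) (m, n) =
      (if m = 0 then p0 else p) * ps * (if n = m + 1 then 1 else 0)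
      + (if m = 0 then p0 else p) * (1 - ps) * (if n = j + 1 + m - i then 1 else 0)) :
    ∀ m n, m ≤ K → 1 ≤ n →
      ∑ i ∈ Finset.range (K + 1), ∑' t : ℕ,
        π i (i + 1 + t) * P (i, i + 1 + t) (m, n) = π m n := by
  intro m n hm hn
  have hpf0 : (0 : ℝ) ≤ 1 - ps := by linarith
  have hpf1 : 1 - ps < 1 := by linarith
  have hπ' : ∀ i t : ℕ, i ≤ K →
      π i (i + 1 + t) = (if i = 0 then p0 else p) * ps * (1 - ps) ^ t := by
    intro i t hi
    rw [hπ]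
    rcases Nat.eq_zero_or_pos i with h0 | h1
    · subst h0
      have hc : (0 : ℕ) = 0 ∧ 1 ≤ 0 + 1 + t := by omega
      rw [if_pos hc]
      have he : 0 + 1 + t - 1 = t := by omega
      rw [he]
      simp
    · have hc0 : ¬ (i = 0 ∧ 1 ≤ i + 1 + t) := by omega
      have hc1 : 1 ≤ i ∧ i ≤ min K (i + 1 + t - 1) := by omega
      rw [if_neg hc0, if_pos hc1]
      have he : i + 1 + t - i - 1 = t := by omega
      rw [he]
      have hi0 : i ≠ 0 := by omega
      simp [hi0]
  have hPt : ∀ i t : ℕ, P (i, i + 1 + t) (m, n) =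
      (if m = 0 then p0 else p) * ps * (if n = m + 1 then 1 else 0)
      + (if m = 0 then p0 else p) * (1 - ps) * (if n = m + t + 2 then 1 else 0) := by
    intro i t
    rw [hP]
    have he : i + 1 + t + 1 + m - i = m + t + 2 := by omega
    rw [he]
  have key : ∀ i ∈ Finset.range (K + 1),
      ∑' t : ℕ, π i (i + 1 + t) * P (i, i + 1 + t) (m, n)
        = (if i = 0 then p0 else p) * π m n := by
    intro i hi
    have hiK : i ≤ K := by
      have := Finset.mem_range.mp hi; omega
    by_cases hA : n = m + 1
    · subst hA
      have hπmn : π m (m + 1) = (if m = 0 then p0 else p) * ps := by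
        have := hπ' m 0 hm
        simpa using this
      have hsummand : ∀ t : ℕ, π i (i + 1 + t) * P (i, i + 1 + t) (m, m + 1) =
          ((if i = 0 then p0 else p) * ps * ((if m = 0 then p0 else p) * ps))
            * (1 - ps) ^ t := by
        intro t
        rw [hπ' i t hiK, hPt i t]
        have h1 : (if (m + 1 : ℕ) = m + 1 then (1 : ℝ) else 0) = 1 := by simp
        have h2 : (if (m + 1 : ℕ) = m + t + 2 then (1 : ℝ) else 0) = 0 := by
          rw [if_neg]; omega
        rw [h1, h2]
        ring
      rw [tsum_congr hsummand, tsum_mul_left, tsum_geometric_of_lt_one hpf0 hpf1]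
      have hps' : (1 : ℝ) - (1 - ps) = ps := by ring
      rw [hps', hπmn]
      field_simp
    · by_cases hB : m + 2 ≤ n
      · set t0 := n - m - 2 with ht0
        have hn2 : n = m + t0 + 2 := by omega
        have hf0 : ∀ b : ℕ, b ≠ t0 →
            π i (i + 1 + b) * P (i, i + 1 + b) (m, n) = 0 := by
          intro b hb
          rw [hπ' i b hiK, hPt i b]
          rw [if_neg hA, if_neg (by omega : ¬ n = m + b + 2)]
          ring
        rw [tsum_eq_single t0 hf0]
        rw [hπ' i t0 hiK, hPt i t0]
        rw [if_neg hA, if_pos hn2]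
        have hπmn : π m n = (if m = 0 then p0 else p) * ps * (1 - ps) ^ (t0 + 1) := by
          have := hπ' m (t0 + 1) hm
          have he : m + 1 + (t0 + 1) = n := by omega
          rw [he] at this
          exact this
        rw [hπmn]
        ring
      · -- n ≤ m, both indicators vanish
        have hf0 : ∀ t : ℕ,
            π i (i + 1 + t) * P (i, i + 1 + t) (m, n) = 0 := by
          intro t
          rw [hπ' i t hiK, hPt i t]
          rw [if_neg hA, if_neg (by omega : ¬ n = m + t + 2)]
          ring
        have hπmn : π m n = 0 := by
          rw [hπ]
          rw [if_neg (by omega : ¬ (m = 0 ∧ 1 ≤ n)),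
              if_neg (by omega : ¬ (1 ≤ m ∧ m ≤ min K (n - 1)))]
        rw [tsum_congr hf0, tsum_zero, hπmn, mul_zero]
  rw [Finset.sum_congr rfl key, ← Finset.sum_mul, sum_c_aux, hsum, one_mul]
end

section
/- Let p_s ∈ (0,1], p_f = 1 - p_s, K ≥ 1 a natural number, and p_0, p ≥ 0 with p_0 + K·p = 1. Then the average AoI under probabilistic clock drift equals: ∑_{i=1}^{∞} i · [ p_0 · p_s · p_f^{i-1} + p · (1 - p_f^{min(K,i-1)}) · p_f^{i-1-min(K,i-1)} ] = (2 + K(K+1)·p·p_s) / (2·p_s). -/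
lemma aux_sum_pow (r : ℝ) (K : ℕ) :
    (1 - r)^2 * ∑ t ∈ Finset.range K, ((t:ℝ)+1) * r^t
      = 1 - ((K:ℝ)+1) * r^K + (K:ℝ) * r^K * r := by
  induction K with
  | zero => simp
  | succ n ih =>
    rw [Finset.sum_range_succ, mul_add, ih]
    push_cast
    ring

lemma aux_gauss (K : ℕ) :
    ∑ t ∈ Finset.range K, ((t:ℝ)+1) = (K:ℝ)*((K:ℝ)+1)/2 := by
  induction K with
  | zero => simp
  | succ n ih =>
    rw [Finset.sum_range_succ, ih]
    push_cast
    ring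

/-- Probabilistic clock drift with `k ∈ {0,…,K}`: the average AoI equals
`(2 + K(K+1)·p·p_s)/(2·p_s)` (summing over `i ≥ 1`, written with `i = t + 1`). -/
theorem average_aoi_probabilistic_drift
    (ps p0 p : ℝ) (K : ℕ) (hK : 1 ≤ K)
    (hps0 : 0 < ps) (hps1 : ps ≤ 1) (hp0 : 0 ≤ p0) (hp : 0 ≤ p)
    (hsum : p0 + (K : ℝ) * p = 1) :
    ∑' t : ℕ, ((t : ℝ) + 1) *
      (p0 * ps * (1 - ps) ^ t
        + p * (1 - (1 - ps) ^ (min K t)) * (1 - ps) ^ (t - min K t))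
    = (2 + (K : ℝ) * ((K : ℝ) + 1) * p * ps) / (2 * ps) := by
  set r : ℝ := 1 - ps with hr
  have hps : ps ≠ 0 := ne_of_gt hps0
  have hr0 : 0 ≤ r := by simp [hr]; linarith
  have hr1 : r < 1 := by simp [hr]; linarith
  have hrn : ‖r‖ < 1 := by rw [Real.norm_eq_abs, abs_of_nonneg hr0]; exact hr1
  have h1r : 1 - r = ps := by simp [hr]
  set f : ℕ → ℝ := fun t => ((t:ℝ)+1) *
      (p0 * ps * r ^ t + p * (1 - r ^ (min K t)) * r ^ (t - min K t)) with hf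
  set C : ℝ := p0 * ps * r ^ K + p * (1 - r ^ K) with hC
  have hfk : ∀ s : ℕ, f (s + K) = C * ((s:ℝ) * r ^ s) + (C * ((K:ℝ)+1)) * r ^ s := by
    intro s
    have hmin : min K (s + K) = K := Nat.min_eq_left (Nat.le_add_left K s)
    have hsub : s + K - K = s := by omega
    simp only [hf, hmin, hsub, hC, pow_add]
    push_cast
    ring
  have h1 : Summable (fun s : ℕ => (s:ℝ) * r ^ s) := by
    simpa using summable_pow_mul_geometric_of_norm_lt_one 1 hrn
  have h2 : Summable (fun s : ℕ => r ^ s) := summable_geometric_of_norm_lt_one hrn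
  have htail : Summable (fun s : ℕ => f (s + K)) :=
    ((h1.mul_left C).add (h2.mul_left (C * ((K:ℝ)+1)))).congr fun s => (hfk s).symm
  have hSf : Summable f := (summable_nat_add_iff K).mp htail
  have hsplit : ∑' t, f t = (∑ t ∈ Finset.range K, f t) + ∑' s, f (s + K) :=
    (Summable.sum_add_tsum_nat_add K hSf).symm
  -- tail value
  have htsum1 : ∑' s : ℕ, (s:ℝ) * r ^ s = r / (1 - r)^2 :=
    tsum_coe_mul_geometric_of_norm_lt_one hrn
  have htsum2 : ∑' s : ℕ, r ^ s = (1 - r)⁻¹ := tsum_geometric_of_lt_one hr0 hr1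
  have hT : ∑' s : ℕ, f (s + K) = C * (r / ps^2) + (C * ((K:ℝ)+1)) * ps⁻¹ := by
    rw [tsum_congr hfk, Summable.tsum_add (h1.mul_left C) (h2.mul_left (C * ((K:ℝ)+1))),
      tsum_mul_left, tsum_mul_left, htsum1, htsum2, h1r]
  -- head value
  have hS : (1 - r)^2 * ∑ t ∈ Finset.range K, ((t:ℝ)+1) * r^t
      = 1 - ((K:ℝ)+1) * r^K + (K:ℝ) * r^K * r := aux_sum_pow r K
  rw [h1r] at hS
  have hhead : ∑ t ∈ Finset.range K, f t
      = (p0 * ps - p) * ∑ t ∈ Finset.range K, ((t:ℝ)+1) * r^t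
        + p * ((K:ℝ)*((K:ℝ)+1)/2) := by
    rw [← aux_gauss K, Finset.mul_sum, Finset.mul_sum, ← Finset.sum_add_distrib]
    apply Finset.sum_congr rfl
    intro t ht
    have htK : t < K := Finset.mem_range.mp ht
    have hmin : min K t = t := Nat.min_eq_right htK.le
    simp only [hf, hmin, Nat.sub_self, pow_zero]
    ring
  set S : ℝ := ∑ t ∈ Finset.range K, ((t:ℝ)+1) * r^t with hSdef
  have hp0e : p0 = 1 - (K:ℝ) * p := by linarith
  rw [hsplit, hT, hhead]
  have hrk : r ^ (K:ℕ) * r = r ^ (K+1) := (pow_succ r K).symm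
  have hSval : S = (1 - ((K:ℝ)+1) * r^K + (K:ℝ) * r^K * r) / ps^2 := by
    rw [eq_div_iff (pow_ne_zero 2 hps)]
    linarith [hS]
  rw [hSval, hp0e, hC, hp0e, hr]
  field_simp
  ring
end

section
/- Let p_s ∈ (0,1], p_f = 1 - p_s, and p_{-1}, p_0, p_1 ≥ 0 with p_{-1} + p_0 + p_1 = 1; set F = 1 − p_s(1 − p_{-1}). Define π on pairs (k, i) with k ∈ {−1, 0, 1} and i ≥ 1 by: π_{−1,1} = p_{−1}·p_s·(1 + p_f·(1 − p_{−1})); π_{−1,i} = p_{−1}·p_s·p_f^{i−1}·F for i ≥ 2; for k ∈ {0,1}: π_{k,k+1} = p_k·p_s, π_{k,k+2} = p_k·p_s·p_f·(1 − p_{−1}), π_{k,i} = p_k·p_s·p_f^{i−2−k}·F for i ≥ k+3, and π_{k,i} = 0 otherwise. Then π satisfies the balance equations: for every target state (m, n) with m ∈ {−1,0,1} and n ≥ 1, ∑_{i∈{−1,0,1}} ∑_{j≥1} π_{i,j} · P((i,j),(m,n)) = π_{m,n}, where P((i,j),(m,n)) = p_m·p_s·[n = max(1, m+1)] + p_m·p_f·[n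 = max(1, j+1+m−i)] and [·] denotes the indicator. -/


private lemma geom_hasSum {ps : ℝ} (h0 : 0 < ps) (h1 : ps ≤ 1) (c : ℝ) :
    HasSum (fun t : ℕ => c * (1 - ps) ^ t) (c / ps) := by
  have h : |1 - ps| < 1 := by rw [abs_lt]; constructor <;> linarith
  have := (hasSum_geometric_of_abs_lt_one h).mul_left c
  simpa [div_eq_mul_inv, show 1 - (1 - ps) = ps by ring] using this

private lemma pickA' (f : ℕ → ℝ) (n : ℕ) (c : ℤ) (t0 : ℕ)
    (h : ∀ t : ℕ, ((n:ℤ) = max 1 ((t:ℤ) + c)) ↔ t = t0) :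
    ∑' t : ℕ, f t * (if (n:ℤ) = max 1 ((t:ℤ) + c) then (1:ℝ) else 0) = f t0 := by
  rw [tsum_eq_single t0 (fun t ht => by
    have hne : ¬((n:ℤ) = max 1 ((t:ℤ) + c)) := fun H => ht ((h t).mp H)
    simp [hne])]
  simp [(h t0).mpr rfl]

private lemma pickB' (f : ℕ → ℝ) (n : ℕ) (c : ℤ)
    (h : ∀ t : ℕ, ¬((n:ℤ) = max 1 ((t:ℤ) + c))) :
    ∑' t : ℕ, f t * (if (n:ℤ) = max 1 ((t:ℤ) + c) then (1:ℝ) else 0) = 0 := by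
  convert tsum_zero with t
  simp [h t]

private lemma pickC' (f : ℕ → ℝ) (n : ℕ) (c : ℤ)
    (h : ∀ t : ℕ, ((n:ℤ) = max 1 ((t:ℤ) + c)) ↔ t ≤ 1) :
    ∑' t : ℕ, f t * (if (n:ℤ) = max 1 ((t:ℤ) + c) then (1:ℝ) else 0) = f 0 + f 1 := by
  rw [tsum_eq_sum (s := Finset.range 2)
    (f := fun t => f t * (if (n:ℤ) = max 1 ((t:ℤ) + c) then (1:ℝ) else 0)) (fun t ht => by
      have h2 : ¬ t ≤ 1 := by simp only [Finset.mem_range] at ht; omega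
      have hne : ¬((n:ℤ) = max 1 ((t:ℤ) + c)) := fun H => h2 ((h t).mp H)
      simp [hne])]
  rw [Finset.sum_range_succ, Finset.sum_range_one,
    if_pos ((h 0).mpr (by omega)), if_pos ((h 1).mpr (by omega)), mul_one, mul_one]

/-- Probabilistic clock drift with `k ∈ {−1,0,1}`: the claimed stationary
distribution `π` satisfies the balance equations of the two-dimensional
Markov chain `(δ(t), Δ(t))`. -/
theorem balance_equations_pm_drift
    (ps pm1 p0 p1 : ℝ)
    (hps0 : 0 < ps) (hps1 : ps ≤ 1)
    (hpm1 : 0 ≤ pm1) (hp0 : 0 ≤ p0) (hp1 : 0 ≤ p1)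
    (hsum : pm1 + p0 + p1 = 1)
    (F : ℝ) (hF : F = 1 - ps * (1 - pm1))
    (q : ℤ → ℝ)
    (hq : ∀ k : ℤ, q k = if k = -1 then pm1 else if k = 0 then p0
      else if k = 1 then p1 else 0)
    (π : ℤ → ℕ → ℝ)
    (hπ : ∀ (k : ℤ) (i : ℕ), π k i =
      if k = -1 ∧ i = 1 then pm1 * ps * (1 + (1 - ps) * (1 - pm1))
      else if k = -1 ∧ 2 ≤ i then pm1 * ps * (1 - ps) ^ (i - 1) * F
      else if k = 0 ∧ i = 1 then p0 * ps
      else if k = 0 ∧ i = 2 then p0 * ps * (1 - ps) * (1 - pm1)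
      else if k = 0 ∧ 3 ≤ i then p0 * ps * (1 - ps) ^ (i - 2) * F
      else if k = 1 ∧ i = 2 then p1 * ps
      else if k = 1 ∧ i = 3 then p1 * ps * (1 - ps) * (1 - pm1)
      else if k = 1 ∧ 4 ≤ i then p1 * ps * (1 - ps) ^ (i - 3) * F
      else 0)
    (P : ℤ × ℕ → ℤ × ℕ → ℝ)
    (hP : ∀ (i : ℤ) (j : ℕ) (m : ℤ) (n : ℕ), P (i, j) (m, n) =
      q m * ps * (if (n : ℤ) = max 1 (m + 1) then 1 else 0)
      + q m * (1 - ps) * (if (n : ℤ) = max 1 ((j : ℤ) + 1 + m - i) then 1 else 0)) :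
    ∀ (m : ℤ) (n : ℕ), m ∈ ({-1, 0, 1} : Finset ℤ) → 1 ≤ n →
      ∑ i ∈ ({-1, 0, 1} : Finset ℤ), ∑' t : ℕ,
        π i (t + 1) * P (i, t + 1) (m, n) = π m n := by
  intro m n hm hn
  subst hF
  have hp1' : p1 = 1 - pm1 - p0 := by linarith
  subst hp1'
  -- row evaluation lemmas
  have hπm1 : ∀ t : ℕ, π (-1) (t + 1) =
      if t = 0 then pm1 * ps * (1 + (1 - ps) * (1 - pm1))
      else pm1 * ps * (1 - ps) ^ t * (1 - ps * (1 - pm1)) := by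
    intro t
    rw [hπ]
    rcases t with _ | s
    · norm_num
    · have h1 : ¬(s + 1 + 1 = 1) := by omega
      have h2 : 2 ≤ s + 1 + 1 := by omega
      simp [h1, h2]
  have hπ0 : ∀ t : ℕ, π 0 (t + 1) =
      if t = 0 then p0 * ps else if t = 1 then p0 * ps * (1 - ps) * (1 - pm1)
      else p0 * ps * (1 - ps) ^ (t - 1) * (1 - ps * (1 - pm1)) := by
    intro t
    rw [hπ]
    rcases t with _ | _ | s
    · norm_num
    · norm_num
    · have h1 : ¬(s + 2 + 1 = 1) := by omega
      have h2 : ¬(s + 2 + 1 = 2) := by omega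
      have h3 : 3 ≤ s + 2 + 1 := by omega
      simp [h1, h2, h3]
  have hπ1 : ∀ t : ℕ, π 1 (t + 1) =
      if t = 0 then 0 else if t = 1 then (1 - pm1 - p0) * ps
      else if t = 2 then (1 - pm1 - p0) * ps * (1 - ps) * (1 - pm1)
      else (1 - pm1 - p0) * ps * (1 - ps) ^ (t - 2) * (1 - ps * (1 - pm1)) := by
    intro t
    rw [hπ]
    rcases t with _ | _ | _ | s
    · norm_num
    · norm_num
    · norm_num
    · have h1 : ¬(s + 3 + 1 = 2) := by omega
      have h2 : ¬(s + 3 + 1 = 3) := by omega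
      have h3 : 4 ≤ s + 3 + 1 := by omega
      simp [h1, h2, h3]
  -- row sums
  have hrowm1 : HasSum (fun t : ℕ => π (-1) (t + 1)) pm1 := by
    have hg : HasSum (fun t : ℕ => π (-1) (t + 1 + 1))
        ((pm1 * ps * (1 - ps) * (1 - ps * (1 - pm1))) / ps) := by
      have h0 := geom_hasSum hps0 hps1 (pm1 * ps * (1 - ps) * (1 - ps * (1 - pm1)))
      have he : (fun t : ℕ => π (-1) (t + 1 + 1)) =
          fun t : ℕ => (pm1 * ps * (1 - ps) * (1 - ps * (1 - pm1))) * (1 - ps) ^ t := by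
        funext t
        rw [hπm1 (t + 1)]
        simp only [Nat.succ_ne_zero, if_false]
        ring
      rw [he]; exact h0
    have h2 := (hasSum_nat_add_iff (f := fun t : ℕ => π (-1) (t + 1)) 1).mp hg
    have hval : (pm1 * ps * (1 - ps) * (1 - ps * (1 - pm1))) / ps
        + ∑ i ∈ Finset.range 1, π (-1) (i + 1) = pm1 := by
      rw [Finset.sum_range_one, hπm1 0, if_pos rfl]
      field_simp
      ring
    rwa [hval] at h2
  have hrow0 : HasSum (fun t : ℕ => π 0 (t + 1)) p0 := by
    have hg : HasSum (fun t : ℕ => π 0 (t + 2 + 1))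
        ((p0 * ps * (1 - ps) * (1 - ps * (1 - pm1))) / ps) := by
      have h0 := geom_hasSum hps0 hps1 (p0 * ps * (1 - ps) * (1 - ps * (1 - pm1)))
      have he : (fun t : ℕ => π 0 (t + 2 + 1)) =
          fun t : ℕ => (p0 * ps * (1 - ps) * (1 - ps * (1 - pm1))) * (1 - ps) ^ t := by
        funext t
        rw [hπ0 (t + 2)]
        have h1 : ¬(t + 2 = 0) := by omega
        have h2 : ¬(t + 2 = 1) := by omega
        simp only [h1, h2, if_false]
        have h3 : t + 2 - 1 = t + 1 := by omega
        rw [h3]; ring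
      rw [he]; exact h0
    have h2 := (hasSum_nat_add_iff (f := fun t : ℕ => π 0 (t + 1)) 2).mp hg
    have hval : (p0 * ps * (1 - ps) * (1 - ps * (1 - pm1))) / ps
        + ∑ i ∈ Finset.range 2, π 0 (i + 1) = p0 := by
      rw [Finset.sum_range_succ, Finset.sum_range_one, hπ0 0, hπ0 1]
      norm_num
      field_simp
      ring
    rwa [hval] at h2
  have hrow1 : HasSum (fun t : ℕ => π 1 (t + 1)) (1 - pm1 - p0) := by
    have hg : HasSum (fun t : ℕ => π 1 (t + 3 + 1))
        (((1 - pm1 - p0) * ps * (1 - ps) * (1 - ps * (1 - pm1))) / ps) := by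
      have h0 := geom_hasSum hps0 hps1 ((1 - pm1 - p0) * ps * (1 - ps) * (1 - ps * (1 - pm1)))
      have he : (fun t : ℕ => π 1 (t + 3 + 1)) =
          fun t : ℕ => ((1 - pm1 - p0) * ps * (1 - ps) * (1 - ps * (1 - pm1))) * (1 - ps) ^ t := by
        funext t
        rw [hπ1 (t + 3)]
        have h1 : ¬(t + 3 = 0) := by omega
        have h2 : ¬(t + 3 = 1) := by omega
        have h3 : ¬(t + 3 = 2) := by omega
        simp only [h1, h2, h3, if_false]
        have h4 : t + 3 - 2 = t + 1 := by omega
        rw [h4]; ring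
      rw [he]; exact h0
    have h2 := (hasSum_nat_add_iff (f := fun t : ℕ => π 1 (t + 1)) 3).mp hg
    have hval : ((1 - pm1 - p0) * ps * (1 - ps) * (1 - ps * (1 - pm1))) / ps
        + ∑ i ∈ Finset.range 3, π 1 (i + 1) = 1 - pm1 - p0 := by
      rw [Finset.sum_range_succ, Finset.sum_range_succ, Finset.sum_range_one,
        hπ1 0, hπ1 1, hπ1 2]
      norm_num
      field_simp
      ring
    rwa [hval] at h2
  -- splitting of each inner tsum
  have hm' : -1 ≤ m ∧ m ≤ 1 := by
    simp only [Finset.mem_insert, Finset.mem_singleton] at hm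
    rcases hm with rfl | rfl | rfl <;> norm_num
  have split : ∀ (i : ℤ) (c : ℤ) (r : ℝ), -1 ≤ i → i ≤ 1 → 2 + m - i = c →
      HasSum (fun t : ℕ => π i (t + 1)) r →
      ∑' t : ℕ, π i (t + 1) * P (i, t + 1) (m, n)
        = r * (q m * ps * (if (n:ℤ) = max 1 (m + 1) then 1 else 0))
          + q m * (1 - ps) * ∑' t : ℕ, π i (t + 1)
              * (if (n:ℤ) = max 1 ((t:ℤ) + c) then 1 else 0) := by
    intro i c r hi1 hi2 hc hr
    have hs2 : Summable (fun t : ℕ => q m * (1 - ps)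
        * (π i (t + 1) * (if (n:ℤ) = max 1 ((t:ℤ) + c) then (1:ℝ) else 0))) := by
      apply summable_of_ne_finset_zero (s := Finset.range (n + 1))
      intro t ht
      simp only [Finset.mem_range, not_lt] at ht
      have hne : ¬((n:ℤ) = max 1 ((t:ℤ) + c)) := by omega
      simp [hne]
    have hrw : ∀ t : ℕ, π i (t + 1) * P (i, t + 1) (m, n)
        = π i (t + 1) * (q m * ps * (if (n:ℤ) = max 1 (m + 1) then 1 else 0))
        + q m * (1 - ps) * (π i (t + 1) * (if (n:ℤ) = max 1 ((t:ℤ) + c) then 1 else 0)) := by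
      intro t
      rw [hP]
      have hco : ((t + 1 : ℕ) : ℤ) + 1 + m - i = (t:ℤ) + c := by push_cast; omega
      rw [hco]; ring
    rw [tsum_congr hrw, Summable.tsum_add (hr.summable.mul_right _) hs2, (hr.mul_right _).tsum_eq,
      tsum_mul_left]
  rw [Finset.sum_insert (by norm_num), Finset.sum_insert (by norm_num), Finset.sum_singleton]
  simp only [Finset.mem_insert, Finset.mem_singleton] at hm
  rcases hm with rfl | rfl | rfl
  · -- m = -1
    rw [split (-1) 2 pm1 (by norm_num) (by norm_num) (by norm_num) hrowm1,
        split 0 1 p0 (by norm_num) (by norm_num) (by norm_num) hrow0,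
        split 1 0 (1 - pm1 - p0) (by norm_num) (by norm_num) (by norm_num) hrow1]
    have hq' : q (-1) = pm1 := by rw [hq]; norm_num
    rw [hq']
    rcases show n = 1 ∨ n = 2 ∨ 3 ≤ n from by omega with rfl | rfl | h3
    · rw [pickB' _ 1 2 (fun t => by omega),
          pickA' _ 1 1 0 (fun t => by omega),
          pickC' _ 1 0 (fun t => by omega),
          if_pos (by norm_num)]
      beta_reduce
      rw [hπ0 0, hπ1 0, hπ1 1, hπm1 0]
      norm_num
      ring
    · rw [pickA' _ 2 2 0 (fun t => by omega),
          pickA' _ 2 1 1 (fun t => by omega),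
          pickA' _ 2 0 2 (fun t => by omega),
          if_neg (by norm_num)]
      beta_reduce
      rw [hπm1 0, hπ0 1, hπ1 2, hπ (-1) 2]
      norm_num
      ring
    · obtain ⟨k, rfl⟩ : ∃ k, n = k + 3 := ⟨n - 3, by omega⟩
      rw [pickA' _ (k + 3) 2 (k + 1) (fun t => by omega),
          pickA' _ (k + 3) 1 (k + 2) (fun t => by omega),
          pickA' _ (k + 3) 0 (k + 3) (fun t => by omega),
          if_neg (by push_cast; omega)]
      beta_reduce
      rw [hπm1 (k + 1), hπ0 (k + 2), hπ1 (k + 3),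
          show k + 3 = (k + 2) + 1 from by omega, hπm1 (k + 2)]
      have e1 : ¬(k + 1 = 0) := by omega
      have e2 : ¬(k + 2 = 0) := by omega
      have e3 : ¬(k + 2 = 1) := by omega
      have e4 : ¬(k + 3 = 0) := by omega
      have e5 : ¬(k + 3 = 1) := by omega
      have e6 : ¬(k + 3 = 2) := by omega
      have e7 : k + 2 - 1 = k + 1 := by omega
      have e8 : k + 3 - 2 = k + 1 := by omega
      simp only [e1, e2, e3, e4, e5, e6, e7, e8, if_false]
      ring
  · -- m = 0
    rw [split (-1) 3 pm1 (by norm_num) (by norm_num) (by norm_num) hrowm1,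
        split 0 2 p0 (by norm_num) (by norm_num) (by norm_num) hrow0,
        split 1 1 (1 - pm1 - p0) (by norm_num) (by norm_num) (by norm_num) hrow1]
    have hq' : q 0 = p0 := by rw [hq]; norm_num
    rw [hq']
    rcases show n = 1 ∨ n = 2 ∨ n = 3 ∨ 4 ≤ n from by omega with rfl | rfl | rfl | h4
    · rw [pickB' _ 1 3 (fun t => by omega),
          pickB' _ 1 2 (fun t => by omega),
          pickA' _ 1 1 0 (fun t => by omega),
          if_pos (by norm_num)]
      beta_reduce
      rw [hπ1 0, hπ 0 1]
      norm_num
      ring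
    · rw [pickB' _ 2 3 (fun t => by omega),
          pickA' _ 2 2 0 (fun t => by omega),
          pickA' _ 2 1 1 (fun t => by omega),
          if_neg (by norm_num)]
      beta_reduce
      rw [hπ0 0, hπ1 1, hπ 0 2]
      norm_num
      ring
    · rw [pickA' _ 3 3 0 (fun t => by omega),
          pickA' _ 3 2 1 (fun t => by omega),
          pickA' _ 3 1 2 (fun t => by omega),
          if_neg (by norm_num)]
      beta_reduce
      rw [hπm1 0, hπ0 1, hπ1 2, hπ 0 3]
      norm_num
      ring
    · obtain ⟨k, rfl⟩ : ∃ k, n = k + 4 := ⟨n - 4, by omega⟩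
      rw [pickA' _ (k + 4) 3 (k + 1) (fun t => by omega),
          pickA' _ (k + 4) 2 (k + 2) (fun t => by omega),
          pickA' _ (k + 4) 1 (k + 3) (fun t => by omega),
          if_neg (by push_cast; omega)]
      beta_reduce
      rw [hπm1 (k + 1), hπ0 (k + 2), hπ1 (k + 3),
          show k + 4 = (k + 3) + 1 from by omega, hπ0 (k + 3)]
      have e1 : ¬(k + 1 = 0) := by omega
      have e2 : ¬(k + 2 = 0) := by omega
      have e3 : ¬(k + 2 = 1) := by omega
      have e4 : ¬(k + 3 = 0) := by omega
      have e5 : ¬(k + 3 = 1) := by omega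
      have e6 : ¬(k + 3 = 2) := by omega
      have e7 : k + 2 - 1 = k + 1 := by omega
      have e8 : k + 3 - 2 = k + 1 := by omega
      have e9 : k + 3 - 1 = k + 2 := by omega
      simp only [e1, e2, e3, e4, e5, e6, e7, e8, e9, if_false]
      ring
  · -- m = 1
    rw [split (-1) 4 pm1 (by norm_num) (by norm_num) (by norm_num) hrowm1,
        split 0 3 p0 (by norm_num) (by norm_num) (by norm_num) hrow0,
        split 1 2 (1 - pm1 - p0) (by norm_num) (by norm_num) (by norm_num) hrow1]
    have hq' : q 1 = 1 - pm1 - p0 := by rw [hq]; norm_num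
    rw [hq']
    rcases show n = 1 ∨ n = 2 ∨ n = 3 ∨ n = 4 ∨ 5 ≤ n from by omega with
      rfl | rfl | rfl | rfl | h5
    · rw [pickB' _ 1 4 (fun t => by omega),
          pickB' _ 1 3 (fun t => by omega),
          pickB' _ 1 2 (fun t => by omega),
          if_neg (by norm_num)]
      rw [hπ 1 1]
      norm_num
    · rw [pickB' _ 2 4 (fun t => by omega),
          pickB' _ 2 3 (fun t => by omega),
          pickA' _ 2 2 0 (fun t => by omega),
          if_pos (by norm_num)]
      beta_reduce
      rw [hπ1 0, hπ 1 2]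
      norm_num
      ring
    · rw [pickB' _ 3 4 (fun t => by omega),
          pickA' _ 3 3 0 (fun t => by omega),
          pickA' _ 3 2 1 (fun t => by omega),
          if_neg (by norm_num)]
      beta_reduce
      rw [hπ0 0, hπ1 1, hπ 1 3]
      norm_num
      ring
    · rw [pickA' _ 4 4 0 (fun t => by omega),
          pickA' _ 4 3 1 (fun t => by omega),
          pickA' _ 4 2 2 (fun t => by omega),
          if_neg (by norm_num)]
      beta_reduce
      rw [hπm1 0, hπ0 1, hπ1 2, hπ 1 4]
      norm_num
      ring
    · obtain ⟨k, rfl⟩ : ∃ k, n = k + 5 := ⟨n - 5, by omega⟩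
      rw [pickA' _ (k + 5) 4 (k + 1) (fun t => by omega),
          pickA' _ (k + 5) 3 (k + 2) (fun t => by omega),
          pickA' _ (k + 5) 2 (k + 3) (fun t => by omega),
          if_neg (by push_cast; omega)]
      beta_reduce
      rw [hπm1 (k + 1), hπ0 (k + 2), hπ1 (k + 3),
          show k + 5 = (k + 4) + 1 from by omega, hπ1 (k + 4)]
      have e1 : ¬(k + 1 = 0) := by omega
      have e2 : ¬(k + 2 = 0) := by omega
      have e3 : ¬(k + 2 = 1) := by omega
      have e4 : ¬(k + 3 = 0) := by omega
      have e5 : ¬(k + 3 = 1) := by omega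
      have e6 : ¬(k + 3 = 2) := by omega
      have e4' : ¬(k + 4 = 0) := by omega
      have e5' : ¬(k + 4 = 1) := by omega
      have e6' : ¬(k + 4 = 2) := by omega
      have e7 : k + 2 - 1 = k + 1 := by omega
      have e8 : k + 3 - 2 = k + 1 := by omega
      have e9 : k + 4 - 2 = k + 2 := by omega
      simp only [e1, e2, e3, e4, e5, e6, e4', e5', e6', e7, e8, e9, if_false]
      ring
end

section
/- Let p_s ∈ (0,1], p_f = 1 - p_s, and p_{-1}, p_0, p_1 ≥ 0 with p_{-1} + p_0 + p_1 = 1; set F = 1 − p_s(1 − p_{-1}). Define π on pairs (k, i) with k ∈ {−1, 0, 1} and i ≥ 1 by: π_{−1,1} = p_{−1}·p_s·(1 + p_f·(1 − p_{−1})); π_{−1,i} = p_{−1}·p_s·p_f^{i−1}·F for i ≥ 2; for k ∈ {0,1}: π_{k,k+1} = p_k·p_s, π_{k,k+2} = p_k·p_s·p_f·(1 − p_{−1}), π_{k,i} = p_k·p_s·p_f^{i−2−k}·F for i ≥ k+3, and π_{k,i} = 0 otherwise. Then π is a probability distribution: ∑_{k∈{−1,0,1}} ∑_{i=1}^{∞}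 π_{k,i} = 1. -/
lemma geom_tail (c r : ℝ) (h0 : 0 ≤ r) (h1 : r < 1) (m : ℕ) (f : ℕ → ℝ)
    (hf : ∀ n, f (n + m) = c * r ^ (n + 1)) :
    ∑' n, f n = (∑ t ∈ Finset.range m, f t) + c * r / (1 - r) := by
  have hgeo : Summable (fun n : ℕ => (c * r) * r ^ n) :=
    (summable_geometric_of_lt_one h0 h1).mul_left _
  have heq : (fun n : ℕ => f (n + m)) = fun n : ℕ => (c * r) * r ^ n := by
    funext n; rw [hf]; ring
  have hsm : Summable (fun n : ℕ => f (n + m)) := by rw [heq]; exact hgeo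
  have hS : Summable f := (summable_nat_add_iff m).1 hsm
  have := Summable.sum_add_tsum_nat_add m hS
  rw [← this, heq, tsum_mul_left, tsum_geometric_of_lt_one h0 h1]
  field_simp

/-- Probabilistic clock drift with `k ∈ {−1,0,1}`: the stationary distribution
`π` is a probability distribution, i.e. `∑_{k∈{−1,0,1}} ∑_{i≥1} π_{k,i} = 1`. -/
theorem stationary_distribution_normalized_pm_drift
    (ps pm1 p0 p1 : ℝ)
    (hps0 : 0 < ps) (hps1 : ps ≤ 1)
    (hpm1 : 0 ≤ pm1) (hp0 : 0 ≤ p0) (hp1 : 0 ≤ p1)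
    (hsum : pm1 + p0 + p1 = 1)
    (F : ℝ) (hF : F = 1 - ps * (1 - pm1))
    (π : ℤ → ℕ → ℝ)
    (hπ : ∀ (k : ℤ) (i : ℕ), π k i =
      if k = -1 ∧ i = 1 then pm1 * ps * (1 + (1 - ps) * (1 - pm1))
      else if k = -1 ∧ 2 ≤ i then pm1 * ps * (1 - ps) ^ (i - 1) * F
      else if k = 0 ∧ i = 1 then p0 * ps
      else if k = 0 ∧ i = 2 then p0 * ps * (1 - ps) * (1 - pm1)
      else if k = 0 ∧ 3 ≤ i then p0 * ps * (1 - ps) ^ (i - 2) * F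
      else if k = 1 ∧ i = 2 then p1 * ps
      else if k = 1 ∧ i = 3 then p1 * ps * (1 - ps) * (1 - pm1)
      else if k = 1 ∧ 4 ≤ i then p1 * ps * (1 - ps) ^ (i - 3) * F
      else 0) :
    ∑ k ∈ ({-1, 0, 1} : Finset ℤ), ∑' t : ℕ, π k (t + 1) = 1 := by
  have h0 : (0:ℝ) ≤ 1 - ps := by linarith
  have h1 : (1:ℝ) - ps < 1 := by linarith
  have hne : ps ≠ 0 := ne_of_gt hps0
  rw [show ({-1, 0, 1} : Finset ℤ) = insert (-1) (insert 0 {1}) from rfl,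
    Finset.sum_insert (by decide), Finset.sum_insert (by decide),
    Finset.sum_singleton]
  have hA : ∑' t : ℕ, π (-1) (t + 1) = pm1 := by
    rw [geom_tail (pm1 * ps * F) (1 - ps) h0 h1 1 _ (by
      intro n; rw [hπ]
      have : ¬ (n + 1 + 1 = 1) := by omega
      simp only [this, and_false, false_and, if_false, and_true, true_and]
      rw [if_pos (by omega), show n + 1 + 1 - 1 = n + 1 from by omega]
      ring)]
    rw [Finset.sum_range_one, hπ]
    norm_num [hF]
    field_simp
    ring
  have hB : ∑' t : ℕ, π 0 (t + 1) = p0 := by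
    rw [geom_tail (p0 * ps * F) (1 - ps) h0 h1 2 _ (by
      intro n; rw [hπ]
      simp only [show ((0:ℤ) = -1) = False from by norm_num, false_and, if_false]
      have h2 : ¬ (n + 2 + 1 = 1) := by omega
      have h3 : ¬ (n + 2 + 1 = 2) := by omega
      simp only [h2, h3, and_false, false_and, if_false, and_true, true_and,
        show ((0:ℤ) = 1) = False from by norm_num]
      rw [if_pos (by omega), show n + 2 + 1 - 2 = n + 1 from by omega]
      ring)]
    rw [Finset.sum_range_succ, Finset.sum_range_one, hπ, hπ]
    norm_num [hF]
    field_simp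
    ring
  have hC : ∑' t : ℕ, π 1 (t + 1) = p1 := by
    rw [geom_tail (p1 * ps * F) (1 - ps) h0 h1 3 _ (by
      intro n; rw [hπ]
      simp only [show ((1:ℤ) = -1) = False from by norm_num,
        show ((1:ℤ) = 0) = False from by norm_num, false_and, if_false]
      have h2 : ¬ (n + 3 + 1 = 2) := by omega
      have h3 : ¬ (n + 3 + 1 = 3) := by omega
      simp only [h2, h3, and_false, false_and, if_false, and_true, true_and]
      rw [if_pos (by omega), show n + 3 + 1 - 3 = n + 1 from by omega]
      ring)]
    rw [Finset.sum_range_succ, Finset.sum_range_succ, Finset.sum_range_one, hπ, hπ, hπ]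
    norm_num [hF]
    field_simp
    ring
  rw [hA, hB, hC]; linarith
end

section
/- Let p_s ∈ (0,1], p_f = 1 - p_s, and p_{-1}, p_0, p_1 ≥ 0 with p_{-1} + p_0 + p_1 = 1; set F = 1 − p_s(1 − p_{-1}). Define the marginal AoI distribution by: P[Δ=1] = p_0·p_s + p_{−1}·p_s·(1 + p_f·(1 − p_{−1})); P[Δ=2] = p_{−1}·p_s·p_f·F + p_0·p_s·p_f·(1 − p_{−1}) + p_1·p_s; P[Δ=3] = (p_{−1}·p_s·p_f² + p_0·p_s·p_f)·F + p_1·p_s·p_f·(1 − p_{−1}); and P[Δ=i] = (p_{−1}·p_s·p_f^{i−1} + p_0·p_s·p_f^{i−2} + p_1·p_s·p_f^{i−3})·F for i ≥ 4. Then ∑_{i=1}^{∞} P[Δ=i] = 1. -/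
/-- Probabilistic clock drift with `k ∈ {−1,0,1}`: the marginal stationary AoI
distribution is normalized, `∑_{i≥1} P[Δ = i] = 1`. -/
theorem marginal_aoi_distribution_normalized_pm_drift
    (ps pm1 p0 p1 : ℝ)
    (hps0 : 0 < ps) (hps1 : ps ≤ 1)
    (hpm1 : 0 ≤ pm1) (hp0 : 0 ≤ p0) (hp1 : 0 ≤ p1)
    (hsum : pm1 + p0 + p1 = 1)
    (F : ℝ) (hF : F = 1 - ps * (1 - pm1))
    (PΔ : ℕ → ℝ)
    (hPΔ : ∀ i : ℕ, PΔ i =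
      if i = 1 then p0 * ps + pm1 * ps * (1 + (1 - ps) * (1 - pm1))
      else if i = 2 then
        pm1 * ps * (1 - ps) * F + p0 * ps * (1 - ps) * (1 - pm1) + p1 * ps
      else if i = 3 then
        (pm1 * ps * (1 - ps) ^ 2 + p0 * ps * (1 - ps)) * F
          + p1 * ps * (1 - ps) * (1 - pm1)
      else if 4 ≤ i then
        (pm1 * ps * (1 - ps) ^ (i - 1) + p0 * ps * (1 - ps) ^ (i - 2)
          + p1 * ps * (1 - ps) ^ (i - 3)) * F
      else 0) :
    ∑' t : ℕ, PΔ (t + 1) = 1 := by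
  set q : ℝ := 1 - ps with hq
  have hq0 : 0 ≤ q := by simp [hq]; linarith
  have hq1 : q < 1 := by simp [hq]; linarith
  set C : ℝ := (pm1 * ps * q ^ 3 + p0 * ps * q ^ 2 + p1 * ps * q) * F with hC
  have key : ∀ t : ℕ, PΔ (t + 4) = C * q ^ t := by
    intro t
    rw [hPΔ]
    have h1 : t + 4 ≠ 1 := by omega
    have h2 : t + 4 ≠ 2 := by omega
    have h3 : t + 4 ≠ 3 := by omega
    have h4 : 4 ≤ t + 4 := by omega
    simp only [h1, h2, h3, h4, if_true, if_false, if_pos]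
    have e1 : t + 4 - 1 = t + 3 := by omega
    have e2 : t + 4 - 2 = t + 2 := by omega
    have e3 : t + 4 - 3 = t + 1 := by omega
    rw [e1, e2, e3]
    ring
  have hgs : Summable (fun t : ℕ => C * q ^ t) :=
    (summable_geometric_of_lt_one hq0 hq1).mul_left C
  have hs4 : Summable (fun t : ℕ => PΔ (t + 4)) := by
    simpa [key] using hgs
  have hs1 : Summable (fun t : ℕ => PΔ (t + 1)) := by
    have := (summable_nat_add_iff (f := fun t : ℕ => PΔ (t + 1)) 3).mpr
    exact (summable_nat_add_iff 3).mp (by simpa [Nat.add_assoc] using hs4)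
  have htail : ∑' t : ℕ, PΔ (t + 4) = C * ps⁻¹ := by
    calc ∑' t : ℕ, PΔ (t + 4) = ∑' t : ℕ, C * q ^ t := by simp [key]
    _ = C * (1 - q)⁻¹ := by
        rw [tsum_mul_left, tsum_geometric_of_lt_one hq0 hq1]
    _ = C * ps⁻¹ := by norm_num [hq]
  have split : ∑' t : ℕ, PΔ (t + 1)
      = PΔ 1 + (PΔ 2 + (PΔ 3 + ∑' t : ℕ, PΔ (t + 4))) := by
    rw [Summable.tsum_eq_zero_add hs1]
    congr 1
    have hs2 : Summable (fun t : ℕ => PΔ (t + 2)) := by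
      have := (summable_nat_add_iff (f := fun t : ℕ => PΔ (t + 1)) 1).mpr hs1
      simpa [Nat.add_assoc] using this
    rw [show (fun t : ℕ => PΔ (t + 1 + 1)) = fun t : ℕ => PΔ (t + 2) by
      funext t; ring_nf, Summable.tsum_eq_zero_add hs2]
    congr 1
    have hs3 : Summable (fun t : ℕ => PΔ (t + 3)) := by
      have := (summable_nat_add_iff (f := fun t : ℕ => PΔ (t + 2)) 1).mpr hs2
      simpa [Nat.add_assoc] using this
    rw [show (fun t : ℕ => PΔ (t + 1 + 2)) = fun t : ℕ => PΔ (t + 3) by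
      funext t; ring_nf, Summable.tsum_eq_zero_add hs3]
  have hp1' : p1 = 1 - pm1 - p0 := by linarith
  rw [split, htail, hPΔ 1, hPΔ 2, hPΔ 3]
  norm_num
  rw [hC, hF, hq, hp1']
  have hps : ps ≠ 0 := ne_of_gt hps0
  field_simp
  ring
end

section
/- Let p_s ∈ (0,1], p_f = 1 - p_s, and p_{-1}, p_0, p_1 ≥ 0 with p_{-1} + p_0 + p_1 = 1; set F = 1 − p_s(1 − p_{-1}). With the marginal AoI distribution P[Δ=1] = p_0·p_s + p_{−1}·p_s·(1 + p_f·(1 − p_{−1})), P[Δ=2] = p_{−1}·p_s·p_f·F + p_0·p_s·p_f·(1 − p_{−1}) + p_1·p_s, P[Δ=3] = (p_{−1}·p_s·p_f² + p_0·p_s·p_f)·F + p_1·p_s·p_f·(1 − p_{−1}), and P[Δ=i] = (p_{−1}·p_s·p_f^{i−1} + p_0·p_s·p_f^{i−2} + p_1·p_s·p_f^{i−3})·F for i ≥ 4, the average AoI satisfies ∑_{i=1}^{∞} i · P[Δ=i] = p_1 + 1/p_s. -/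
/-- Probabilistic clock drift with `k ∈ {−1,0,1}`: the average AoI equals
`p_1 + 1/p_s`, i.e. `∑_{i≥1} i · P[Δ = i] = p_1 + 1/p_s`. -/
theorem average_aoi_pm_drift
    (ps pm1 p0 p1 : ℝ)
    (hps0 : 0 < ps) (hps1 : ps ≤ 1)
    (hpm1 : 0 ≤ pm1) (hp0 : 0 ≤ p0) (hp1 : 0 ≤ p1)
    (hsum : pm1 + p0 + p1 = 1)
    (F : ℝ) (hF : F = 1 - ps * (1 - pm1))
    (PΔ : ℕ → ℝ)
    (hPΔ : ∀ i : ℕ, PΔ i =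
      if i = 1 then p0 * ps + pm1 * ps * (1 + (1 - ps) * (1 - pm1))
      else if i = 2 then
        pm1 * ps * (1 - ps) * F + p0 * ps * (1 - ps) * (1 - pm1) + p1 * ps
      else if i = 3 then
        (pm1 * ps * (1 - ps) ^ 2 + p0 * ps * (1 - ps)) * F
          + p1 * ps * (1 - ps) * (1 - pm1)
      else if 4 ≤ i then
        (pm1 * ps * (1 - ps) ^ (i - 1) + p0 * ps * (1 - ps) ^ (i - 2)
          + p1 * ps * (1 - ps) ^ (i - 3)) * F
      else 0) :
    ∑' t : ℕ, ((t : ℝ) + 1) * PΔ (t + 1) = p1 + 1 / ps := by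
  set q : ℝ := 1 - ps with hq
  have hq0 : 0 ≤ q := by rw [hq]; linarith
  have hq1 : q < 1 := by rw [hq]; linarith
  have hnq : ‖q‖ < 1 := by rw [Real.norm_eq_abs, abs_of_nonneg hq0]; exact hq1
  set K : ℝ := ps * F * (pm1 * q ^ 3 + p0 * q ^ 2 + p1 * q) with hK
  set f : ℕ → ℝ := fun t => ((t : ℝ) + 1) * PΔ (t + 1) with hf
  have hg : ∀ n : ℕ, f (n + 3) = K * ((n : ℝ) * q ^ n) + 4 * K * q ^ n := by
    intro n
    have h1 : n + 3 + 1 = n + 4 := rfl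
    have e1 : n + 4 - 1 = n + 3 := rfl
    have e2 : n + 4 - 2 = n + 2 := rfl
    have e3 : n + 4 - 3 = n + 1 := rfl
    simp only [hf, hPΔ, h1, e1, e2, e3]
    rw [if_neg (by omega), if_neg (by omega), if_neg (by omega),
      if_pos (by omega)]
    push_cast
    rw [hK]
    ring
  have hs1 : Summable (fun n : ℕ => (n : ℝ) * q ^ n) :=
    (hasSum_coe_mul_geometric_of_norm_lt_one hnq).summable
  have hs2 : Summable (fun n : ℕ => q ^ n) := summable_geometric_of_lt_one hq0 hq1
  have hsg : Summable (fun n : ℕ => f (n + 3)) := by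
    simp only [hg]
    exact ((hs1.mul_left K).add ((hs2.mul_left (4 * K))))
  have hsf : Summable f := (summable_nat_add_iff 3).mp hsg
  have hsplit := Summable.sum_add_tsum_nat_add (f := f) 3 hsf
  have htail : ∑' n : ℕ, f (n + 3) = K * (q / (1 - q) ^ 2) + 4 * K * (1 - q)⁻¹ := by
    calc ∑' n : ℕ, f (n + 3)
        = ∑' n : ℕ, (K * ((n : ℝ) * q ^ n) + 4 * K * q ^ n) := by
          exact tsum_congr hg
      _ = K * (∑' n : ℕ, (n : ℝ) * q ^ n) + 4 * K * (∑' n : ℕ, q ^ n) := by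
          rw [Summable.tsum_add (hs1.mul_left K) (hs2.mul_left (4 * K)),
            tsum_mul_left, tsum_mul_left]
      _ = K * (q / (1 - q) ^ 2) + 4 * K * (1 - q)⁻¹ := by
          rw [tsum_coe_mul_geometric_of_norm_lt_one hnq,
            tsum_geometric_of_lt_one hq0 hq1]
  have hval : ∑' t : ℕ, f t = p1 + 1 / ps := by
    rw [← hsplit, htail]
    have hf0 : f 0 = 1 * PΔ 1 := by simp [hf]
    have hf1 : f 1 = 2 * PΔ 2 := by norm_num [hf]
    have hf2 : f 2 = 3 * PΔ 3 := by norm_num [hf]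
    rw [Finset.sum_range_succ, Finset.sum_range_succ, Finset.sum_range_one,
      hf0, hf1, hf2, hPΔ 1, hPΔ 2, hPΔ 3]
    norm_num
    have hps' : ps ≠ 0 := ne_of_gt hps0
    have h1q : 1 - q = ps := by rw [hq]; ring
    rw [h1q, hK, hF, hq]
    have hp0' : p0 = 1 - pm1 - p1 := by linarith
    field_simp
    rw [hp0']
    ring
  exact hval
end
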